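/- arXiv:0906.2747 — 2 statements merged into one kernel-verified Lean document; each statement's English description precedes it below -/
import Mathlib

section
/- The algebra of invariant polynomial functions on the Lie algebra sl_2(ℂ) under the adjoint action of SL_2(ℂ) is a polynomial algebra generated by the determinant (equivalently, by the quadratic Casimir X ↦ tr(X²)). -/
/-!
A traceless `A` with `A 0 1 ≠ 0` is conjugate in `SL₂(ℂ)` to the companion matrix
`!![0, 1; -det A, 0]` of its characteristic polynomial `x² + det A`, so an invariant `f` agrees
there with `p (det A)`, where `p d := f !![0, 1; -d, 0]` is a polynomial because `f` is.
Both sides are polynomial in the entry `A 0 1`, so they also agree where it vanishes.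
Uniqueness follows by evaluating at the companion matrices.
-/

open Matrix

/-- A function on 2×2 complex matrices is a polynomial function if it is given by a
polynomial in the matrix entries. -/
def IsPolyFun2 (f : Matrix (Fin 2) (Fin 2) ℂ → ℂ) : Prop :=
  ∃ F : MvPolynomial (Fin 2 × Fin 2) ℂ,
    ∀ X, f X = MvPolynomial.eval (fun p => X p.1 p.2) F

open scoped Polynomial

namespace IsPolyFun2

variable {f g : Matrix (Fin 2) (Fin 2) ℂ → ℂ}

theorem det : IsPolyFun2 Matrix.det :=
  ⟨(mvPolynomialX (Fin 2) (Fin 2) ℂ).det, fun A => by rw [eval_det_mvPolynomialX]; rfl⟩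

theorem polynomial_eval (p : ℂ[X]) (hf : IsPolyFun2 f) : IsPolyFun2 fun A => p.eval (f A) := by
  obtain ⟨F, hF⟩ := hf
  refine ⟨Polynomial.aeval F p, fun A => ?_⟩
  simpa [hF] using Polynomial.aeval_algHom_apply (MvPolynomial.aeval fun q => A q.1 q.2) F p

theorem exists_map_algHom (hf : IsPolyFun2 f) {R : Type*} [CommRing R] [Algebra ℂ R]
    (M : Matrix (Fin 2) (Fin 2) R) : ∃ P : R, ∀ φ : R →ₐ[ℂ] ℂ, f (M.map φ) = φ P := by
  obtain ⟨F, hF⟩ := hf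
  refine ⟨MvPolynomial.aeval (fun q => M q.1 q.2) F, fun φ => ?_⟩
  rw [hF, MvPolynomial.comp_aeval_apply, ← MvPolynomial.coe_aeval_eq_eval]
  rfl

theorem exists_eval_line (hf : IsPolyFun2 f) (a c d : ℂ) :
    ∃ P : ℂ[X], ∀ b, f !![a, b; c, d] = P.eval b := by
  obtain ⟨P, hP⟩ := hf.exists_map_algHom
    !![Polynomial.C a, Polynomial.X; Polynomial.C c, Polynomial.C d]
  refine ⟨P, fun b => ?_⟩
  rw [← Polynomial.coe_aeval_eq_eval, ← hP]
  congr 1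
  ext i j; fin_cases i <;> fin_cases j <;> simp

theorem exists_eval_companion (hf : IsPolyFun2 f) :
    ∃ p : ℂ[X], ∀ d, f !![0, 1; -d, 0] = p.eval d := by
  obtain ⟨p, hp⟩ :=
    hf.exists_map_algHom (!![0, 1; -Polynomial.X, 0] : Matrix (Fin 2) (Fin 2) ℂ[X])
  refine ⟨p, fun d => ?_⟩
  rw [← Polynomial.coe_aeval_eq_eval, ← hp]
  congr 1
  ext i j; fin_cases i <;> fin_cases j <;> simp

theorem eq_on_traceless_of_entry_ne_zero (hf : IsPolyFun2 f) (hg : IsPolyFun2 g)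
    (h : ∀ A : Matrix (Fin 2) (Fin 2) ℂ, A.trace = 0 → A 0 1 ≠ 0 → f A = g A)
    {A : Matrix (Fin 2) (Fin 2) ℂ} (hA : A.trace = 0) : f A = g A := by
  obtain ⟨P, hP⟩ := hf.exists_eval_line (A 0 0) (A 1 0) (A 1 1)
  obtain ⟨Q, hQ⟩ := hg.exists_eval_line (A 0 0) (A 1 0) (A 1 1)
  have hPQ : P = Q := by
    refine Polynomial.eq_of_infinite_eval_eq P Q
      ((Set.finite_singleton 0).infinite_compl.mono fun b hb => ?_)
    rw [Set.mem_ofPred_eq, ← hP, ← hQ]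
    refine h _ ?_ hb
    rwa [trace_fin_two_of, ← trace_fin_two]
  rw [eta_fin_two A, hP, hQ, hPQ]

end IsPolyFun2

theorem exists_conj_eq_companion {A : Matrix (Fin 2) (Fin 2) ℂ} (hA : A.trace = 0)
    (h01 : A 0 1 ≠ 0) :
    ∃ g : SpecialLinearGroup (Fin 2) ℂ, (g : Matrix (Fin 2) (Fin 2) ℂ) * A *
      ((g⁻¹ : SpecialLinearGroup (Fin 2) ℂ) : Matrix (Fin 2) (Fin 2) ℂ) =
        !![0, 1; -A.det, 0] := by
  obtain ⟨t, ht⟩ := IsAlgClosed.exists_pow_nat_eq (A 0 1)⁻¹ two_pos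
  have hA11 : A 1 1 = -A 0 0 := by rw [trace_fin_two] at hA; linear_combination hA
  set G : Matrix (Fin 2) (Fin 2) ℂ := t • !![1, 0; A 0 0, A 0 1] with hG
  have hGA : G * A = !![0, 1; -A.det, 0] * G := by
    ext i j; fin_cases i <;> fin_cases j <;> simp [hG, det_fin_two, hA11, mul_apply] <;> ring
  have hdet : G.det = 1 := by
    rw [hG, det_smul, det_fin_two_of, Fintype.card_fin, ht]; field_simp; ring
  refine ⟨⟨G, hdet⟩, ?_⟩
  change G * A * adjugate G = _
  rw [hGA, Matrix.mul_assoc, mul_adjugate, hdet, one_smul, Matrix.mul_one]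

/-- **Invariant polynomials on `sl₂(ℂ)`.**  Every polynomial function on the trace-zero
2×2 matrices invariant under conjugation by `SL₂(ℂ)` is a polynomial in the determinant
(equivalently, in the quadratic Casimir `X ↦ tr(X²)`), and this polynomial is unique:
the invariant ring is the polynomial algebra generated by `det`. -/
theorem sl2_invariants_generated_by_det
    (f : Matrix (Fin 2) (Fin 2) ℂ → ℂ) (hpoly : IsPolyFun2 f)
    (hinv : ∀ g : Matrix.SpecialLinearGroup (Fin 2) ℂ, ∀ X : Matrix (Fin 2) (Fin 2) ℂ,
      X.trace = 0 → f ((g : Matrix (Fin 2) (Fin 2) ℂ) * X * ((g⁻¹ : Matrix.SpecialLinearGroup (Fin 2) ℂ) : Matrix (Fin 2) (Fin 2) ℂ)) = f X) :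
    ∃! p : Polynomial ℂ, ∀ X : Matrix (Fin 2) (Fin 2) ℂ,
      X.trace = 0 → f X = p.eval X.det := by
  obtain ⟨p, hp⟩ := hpoly.exists_eval_companion
  refine ⟨p, fun X hX => ?_, fun q hq => Polynomial.funext fun d => ?_⟩
  · refine hpoly.eq_on_traceless_of_entry_ne_zero (IsPolyFun2.det.polynomial_eval p)
      (fun Y hY h01 => ?_) hX
    obtain ⟨g, hg⟩ := exists_conj_eq_companion hY h01
    rw [← hinv g Y hY, hg, hp]
  · have hqd := hq !![0, 1; -d, 0] (by simp [trace_fin_two])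
    rw [hp, det_fin_two_of] at hqd
    simpa using hqd.symm
end

section
/- Chevalley restriction for gl_n: restriction to the diagonal matrices induces an isomorphism from the algebra of conjugation-invariant polynomial functions on gl_n(ℂ) to the algebra of symmetric polynomials in n variables; in particular it is freely generated by the coefficients of the characteristic polynomial, of degrees 1, 2, …, n. -/
open Matrix

variable (n : ℕ)

/-- A function on `n×n` complex matrices is a polynomial function if it is given by a
polynomial in the matrix entries. -/
def IsPolyFun (n : ℕ) (f : Matrix (Fin n) (Fin n) ℂ → ℂ) : Prop :=
  ∃ F : MvPolynomial (Fin n × Fin n) ℂ,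
    ∀ X, f X = MvPolynomial.eval (fun p => X p.1 p.2) F

/-- A function on `gl_n(ℂ)` is invariant if it is constant on conjugacy classes under
`GL_n(ℂ)`. -/
def IsInvariantFun (n : ℕ) (f : Matrix (Fin n) (Fin n) ℂ → ℂ) : Prop :=
  ∀ g : GL (Fin n) ℂ, ∀ X : Matrix (Fin n) (Fin n) ℂ,
    f ((g : Matrix (Fin n) (Fin n) ℂ) * X * ((g⁻¹ : GL (Fin n) ℂ) : Matrix (Fin n) (Fin n) ℂ)) = f X


/-!
The coefficients of `det (t - X)` are invariant polynomial functions, and on `diagonal d` they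
are, up to sign, the elementary symmetric polynomials of `d` (Vieta). By the fundamental theorem
on symmetric polynomials, every symmetric polynomial is a unique polynomial in them; conversely,
restricting an invariant function to the diagonal gives a symmetric polynomial, because
permutation matrices permute the diagonal entries.

Injectivity of the restriction: an invariant polynomial function `f` that vanishes on the
diagonal also vanishes on every matrix with distinct eigenvalues, since such matrices are
diagonalizable. The product `∏_{i ≠ j} (x_i - x_j)` is symmetric, so it is a polynomial `δ` in the
characteristic coefficients. Then `δ * f = 0` as a polynomial in the matrix entries, and
`δ ≠ 0`, so `f = 0`.
-/

open MvPolynomial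

noncomputable section

namespace MvPolynomial

variable {σ τ R : Type*} [CommRing R]

lemma eval_bind₁ (v : τ → R) (g : σ → MvPolynomial τ R) (p : MvPolynomial σ R) :
    eval v (bind₁ g p) = eval (fun i => eval v (g i)) p :=
  eval₂Hom_bind₁ _ _ _ _

def negateVars : MvPolynomial σ R →ₐ[R] MvPolynomial σ R := aeval fun i => -X i

@[simp]
lemma negateVars_X (i : σ) : negateVars (X i : MvPolynomial σ R) = -X i := aeval_X _ _

lemma negateVars_negateVars (p : MvPolynomial σ R) : negateVars (negateVars p) = p := by
  change (negateVars.comp negateVars) p = AlgHom.id R _ p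
  congr 1
  ext i
  simp

lemma negateVars_injective : Function.Injective (negateVars : MvPolynomial σ R → _) :=
  Function.LeftInverse.injective negateVars_negateVars

lemma IsSymmetric.negateVars {p : MvPolynomial σ R} (hp : p.IsSymmetric) :
    (negateVars p).IsSymmetric := by
  intro e
  have h : (rename e).comp (MvPolynomial.negateVars (R := R)) =
      MvPolynomial.negateVars.comp (rename e) := by
    ext i
    simp
  rw [← AlgHom.comp_apply, h, AlgHom.comp_apply, hp e]

lemma coeff_prod_X_sub_C_X [Fintype σ] {k : ℕ} (hk : k ≤ Fintype.card σ) :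
    (∏ i : σ, (Polynomial.X - Polynomial.C (X i : MvPolynomial σ R))).coeff k
      = negateVars (esymm σ R (Fintype.card σ - k)) := by
  have h : ∏ i : σ, (Polynomial.X - Polynomial.C (X i : MvPolynomial σ R))
      = (∏ i : σ, (Polynomial.X + Polynomial.C (X i))).map negateVars.toRingHom := by
    simp [Polynomial.map_prod, sub_eq_add_neg]
  rw [h, Polynomial.coeff_map, prod_X_add_C_coeff _ _ _ hk]
  rfl

def diffProd (ι R : Type*) [Fintype ι] [DecidableEq ι] [CommRing R] : MvPolynomial ι R :=
  ∏ ij ∈ Finset.univ.offDiag, (X ij.1 - X ij.2)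

variable {ι : Type*} [Fintype ι] [DecidableEq ι]

lemma isSymmetric_diffProd : (diffProd ι R).IsSymmetric := by
  intro e
  simp only [diffProd, map_prod, map_sub, rename_X]
  exact Finset.prod_equiv (e.prodCongr e) (by simp) (by simp)

lemma eval_diffProd_ne_zero_iff [IsDomain R] {r : ι → R} :
    eval r (diffProd ι R) ≠ 0 ↔ Function.Injective r := by
  simp [diffProd, Finset.prod_ne_zero_iff, sub_eq_zero, Function.Injective, not_imp_not]

end MvPolynomial

namespace Matrix

section CharpolyCoeffs

variable {n} {R : Type*} [CommRing R]

def charpolyCoeffs (A : Matrix (Fin n) (Fin n) R) : Fin n → R := fun k => A.charpoly.coeff k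

lemma charpolyCoeffs_map {S : Type*} [CommRing S] (A : Matrix (Fin n) (Fin n) R) (f : R →+* S) :
    charpolyCoeffs (A.map f) = f ∘ charpolyCoeffs A := by
  ext k
  simp [charpolyCoeffs, charpoly_map]

lemma charpolyCoeffs_units_conj (g : GL (Fin n) R) (A : Matrix (Fin n) (Fin n) R) :
    charpolyCoeffs
        ((g : Matrix (Fin n) (Fin n) R) * A * ((g⁻¹ : GL (Fin n) R) : Matrix (Fin n) (Fin n) R))
      = charpolyCoeffs A := by
  ext k
  simp [charpolyCoeffs]

lemma charpolyCoeffs_diagonal_X (k : Fin n) :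
    charpolyCoeffs (diagonal (X : Fin n → MvPolynomial (Fin n) R)) k
      = negateVars (esymm (Fin n) R (k.rev + 1)) := by
  rw [charpolyCoeffs, charpoly_diagonal, coeff_prod_X_sub_C_X (by simp [k.isLt.le]),
    Fintype.card_fin, Fin.val_rev]
  congr 3
  omega

lemma bind₁_charpolyCoeffs_diagonal_X (p : MvPolynomial (Fin n) R) :
    bind₁ (charpolyCoeffs (diagonal X)) p
      = negateVars (esymmAlgHom (Fin n) R n (rename Fin.rev p) : MvPolynomial (Fin n) R) := by
  rw [esymmAlgHom_apply, aeval_rename, ← AlgHom.comp_apply, comp_aeval, ← aeval_eq_bind₁]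
  congr 1
  ext k
  simp [charpolyCoeffs_diagonal_X]

lemma bind₁_charpolyCoeffs_diagonal_X_injective :
    Function.Injective
      (bind₁ (charpolyCoeffs (diagonal (X : Fin n → MvPolynomial (Fin n) R)))) := by
  intro p q h
  simp only [bind₁_charpolyCoeffs_diagonal_X] at h
  exact rename_injective _ Fin.rev_injective
    ((esymmAlgHom_fin_bijective R n).1 (Subtype.ext (negateVars_injective h)))

lemma exists_bind₁_charpolyCoeffs_diagonal_X_eq {s : MvPolynomial (Fin n) R}
    (hs : s.IsSymmetric) : ∃ p, bind₁ (charpolyCoeffs (diagonal X)) p = s := by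
  obtain ⟨q, hq⟩ := (esymmAlgHom_fin_bijective R n).2 ⟨_, hs.negateVars⟩
  refine ⟨rename Fin.rev q, ?_⟩
  rw [bind₁_charpolyCoeffs_diagonal_X, rename_rename, Fin.rev_involutive.comp_self,
    rename_id_apply, hq, negateVars_negateVars]

lemma eval_charpolyCoeffs_diagonal (d : Fin n → R) (p : MvPolynomial (Fin n) R) :
    eval (charpolyCoeffs (diagonal d)) p = eval d (bind₁ (charpolyCoeffs (diagonal X)) p) := by
  rw [eval_bind₁, ← Function.comp_def (eval d), ← charpolyCoeffs_map,
    diagonal_map (map_zero _)]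
  simp

end CharpolyCoeffs

variable {m K : Type*} [Fintype m] [DecidableEq m] [Field K]

lemma exists_charpoly_eq_prod_X_sub_C [IsAlgClosed K] (A : Matrix m m K) :
    ∃ r : m → K, A.charpoly = ∏ i, (Polynomial.X - Polynomial.C (r i)) := by
  classical
  have hs : Fintype.card m = Fintype.card A.charpoly.roots := by
    rw [Multiset.card_coe, ← (IsAlgClosed.splits _).natDegree_eq_card_roots,
      charpoly_natDegree_eq_dim]
  let e := Fintype.equivOfCardEq hs
  refine ⟨fun i => e i, ?_⟩
  conv_lhs => rw [(IsAlgClosed.splits _).eq_prod_roots_of_monic A.charpoly_monic]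
  rw [e.prod_comp (fun x : A.charpoly.roots => Polynomial.X - Polynomial.C (x : K)),
    Finset.prod_eq_multiset_prod]
  exact congrArg Multiset.prod (Multiset.map_univ _ _).symm

lemma exists_units_conj_diagonal_eq {A : Matrix m m K} {r : m → K} (hr : Function.Injective r)
    (hA : A.charpoly = ∏ i, (Polynomial.X - Polynomial.C (r i))) :
    ∃ g : GL m K, (g : Matrix m m K) * diagonal r * ((g⁻¹ : GL m K) : Matrix m m K) = A := by
  have hroot (i : m) : Module.End.HasEigenvalue (toLin' A) (r i) := by
    rw [Module.End.hasEigenvalue_iff_isRoot_charpoly, charpoly_toLin', hA, Polynomial.isRoot_prod]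
    exact ⟨i, Finset.mem_univ _, by simp⟩
  choose v hv using fun i => (hroot i).exists_hasEigenvector
  obtain ⟨g, hg⟩ : IsUnit (of fun i j => v j i) :=
    linearIndependent_cols_iff_isUnit.1 (Module.End.eigenvectors_linearIndependent' _ r hr v hv)
  have hAg : A * g = g * diagonal r := by
    ext i j
    rw [hg, mul_diagonal]
    simpa [mul_comm, Matrix.mul_apply, mulVec, dotProduct] using congrFun (hv j).apply_eq_smul i
  exact ⟨g, by rw [← hAg, Units.mul_inv_cancel_right]⟩

lemma permMatrix_conj_diagonal {R : Type*} [CommRing R] (σ : Equiv.Perm m) (d : m → R) :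
    ((permMatrixHom.toHomUnits σ : GL m R) : Matrix m m R) * diagonal d *
      ((permMatrixHom.toHomUnits σ)⁻¹ : GL m R) = diagonal (d ∘ σ.symm) := by
  rw [← map_inv, MonoidHom.coe_toHomUnits, MonoidHom.coe_toHomUnits, permMatrixHom_apply,
    permMatrixHom_apply, inv_inv, PEquiv.toMatrix_toPEquiv_mul, PEquiv.mul_toMatrix_toPEquiv,
    submatrix_submatrix]
  exact submatrix_diagonal_equiv d σ.symm

end Matrix

section InvariantFunctions

variable {n}

lemma IsPolyFun.eq_of_eqOn_ne_zero {f₁ f₂ δ : Matrix (Fin n) (Fin n) ℂ → ℂ}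
    (h₁ : IsPolyFun n f₁) (h₂ : IsPolyFun n f₂) (hδ : IsPolyFun n δ)
    {A₀ : Matrix (Fin n) (Fin n) ℂ} (hA₀ : δ A₀ ≠ 0)
    (h : ∀ A, δ A ≠ 0 → f₁ A = f₂ A) :
    f₁ = f₂ := by
  obtain ⟨F₁, hF₁⟩ := h₁
  obtain ⟨F₂, hF₂⟩ := h₂
  obtain ⟨G, hG⟩ := hδ
  have hGF : G * (F₁ - F₂) = 0 := by
    refine MvPolynomial.funext fun v => ?_
    have := h (of fun i j => v (i, j))
    simp only [hF₁, hF₂, hG, of_apply, Prod.mk.eta] at this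
    simpa [sub_eq_zero, or_iff_not_imp_left] using this
  have hG0 : G ≠ 0 := by
    rintro rfl
    simp [hG] at hA₀
  have hF : F₁ = F₂ := sub_eq_zero.1 ((mul_eq_zero.1 hGF).resolve_left hG0)
  funext A
  rw [hF₁, hF₂, hF]

lemma isPolyFun_eval_charpolyCoeffs (p : MvPolynomial (Fin n) ℂ) :
    IsPolyFun n fun A => eval (charpolyCoeffs A) p := by
  refine ⟨bind₁ (charpolyCoeffs (mvPolynomialX (Fin n) (Fin n) ℂ)) p, fun A => ?_⟩
  rw [eval_bind₁, ← Function.comp_def (eval _), ← charpolyCoeffs_map]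
  exact congrArg (fun B => eval (charpolyCoeffs B) p) (mvPolynomialX_map_eval₂ _ A).symm

lemma isInvariantFun_eval_charpolyCoeffs (p : MvPolynomial (Fin n) ℂ) :
    IsInvariantFun n fun A => eval (charpolyCoeffs A) p := fun g A => by
  simp only [charpolyCoeffs_units_conj]

lemma IsPolyFun.exists_eval_eq_diagonal {f : Matrix (Fin n) (Fin n) ℂ → ℂ}
    (hf : IsPolyFun n f) :
    ∃ s : MvPolynomial (Fin n) ℂ, ∀ d, eval d s = f (diagonal d) := by
  obtain ⟨F, hF⟩ := hf
  refine ⟨bind₁ (fun ij => diagonal X ij.1 ij.2) F, fun d => ?_⟩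
  rw [hF, eval_bind₁]
  congr
  ext ⟨i, j⟩
  by_cases h : i = j <;> simp [h]

lemma IsInvariantFun.isSymmetric_of_eval_eq_diagonal {f : Matrix (Fin n) (Fin n) ℂ → ℂ}
    (hf : IsInvariantFun n f) {s : MvPolynomial (Fin n) ℂ}
    (hs : ∀ d, eval d s = f (diagonal d)) :
    s.IsSymmetric := fun σ => MvPolynomial.funext fun d => by
  have hconj := permMatrix_conj_diagonal σ.symm d
  rw [Equiv.symm_symm] at hconj
  rw [eval_rename, hs, hs, ← hconj, hf]

theorem eq_of_forall_diagonal_eq {f₁ f₂ : Matrix (Fin n) (Fin n) ℂ → ℂ}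
    (hp₁ : IsPolyFun n f₁) (hi₁ : IsInvariantFun n f₁)
    (hp₂ : IsPolyFun n f₂) (hi₂ : IsInvariantFun n f₂)
    (hd : ∀ d, f₁ (diagonal d) = f₂ (diagonal d)) : f₁ = f₂ := by
  obtain ⟨p, hp⟩ :=
    exists_bind₁_charpolyCoeffs_diagonal_X_eq (isSymmetric_diffProd (ι := Fin n) (R := ℂ))
  have hδ (r : Fin n → ℂ) :
      eval (charpolyCoeffs (diagonal r)) p = eval r (diffProd (Fin n) ℂ) := by
    rw [eval_charpolyCoeffs_diagonal, hp]
  refine hp₁.eq_of_eqOn_ne_zero hp₂ (isPolyFun_eval_charpolyCoeffs p)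
    (A₀ := diagonal fun i => (i : ℂ)) ?_ fun A hA => ?_
  · rw [hδ, eval_diffProd_ne_zero_iff]
    exact Nat.cast_injective.comp Fin.val_injective
  · obtain ⟨r, hr⟩ := exists_charpoly_eq_prod_X_sub_C A
    have hAr : charpolyCoeffs A = charpolyCoeffs (diagonal r) := by
      unfold charpolyCoeffs
      rw [hr, charpoly_diagonal]
    rw [hAr, hδ, eval_diffProd_ne_zero_iff] at hA
    obtain ⟨g, rfl⟩ := exists_units_conj_diagonal_eq hA hr
    rw [hi₁, hi₂, hd]

end InvariantFunctions

end

/-- **Chevalley restriction for `gl_n`.**  Restriction to the diagonal matrices is an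
isomorphism from the conjugation-invariant polynomial functions on `gl_n(ℂ)` onto the
symmetric polynomial functions in `n` variables: it is injective, its image is exactly the
symmetric polynomials, and the invariant ring is freely generated by the coefficients of
the characteristic polynomial (of degrees `1, 2, …, n`). -/
theorem chevalley_restriction_gl :
    (∀ f₁ f₂ : Matrix (Fin n) (Fin n) ℂ → ℂ,
      IsPolyFun n f₁ → IsInvariantFun n f₁ → IsPolyFun n f₂ → IsInvariantFun n f₂ →
      (∀ d : Fin n → ℂ, f₁ (diagonal d) = f₂ (diagonal d)) → f₁ = f₂) ∧
    (∀ s : MvPolynomial (Fin n) ℂ, s.IsSymmetric →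
      ∃ f : Matrix (Fin n) (Fin n) ℂ → ℂ, IsPolyFun n f ∧ IsInvariantFun n f ∧
        ∀ d : Fin n → ℂ, f (diagonal d) = MvPolynomial.eval d s) ∧
    (∀ f : Matrix (Fin n) (Fin n) ℂ → ℂ, IsPolyFun n f → IsInvariantFun n f →
      ∃! p : MvPolynomial (Fin n) ℂ, ∀ X : Matrix (Fin n) (Fin n) ℂ,
        f X = MvPolynomial.eval (fun i : Fin n => X.charpoly.coeff (i : ℕ)) p) := by
  refine ⟨fun f₁ f₂ => eq_of_forall_diagonal_eq, fun s hs => ?_, fun f hp hi => ?_⟩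
  · obtain ⟨p, rfl⟩ := exists_bind₁_charpolyCoeffs_diagonal_X_eq hs
    exact ⟨_, isPolyFun_eval_charpolyCoeffs p, isInvariantFun_eval_charpolyCoeffs p,
      fun d => eval_charpolyCoeffs_diagonal d p⟩
  · obtain ⟨s, hs⟩ := hp.exists_eval_eq_diagonal
    obtain ⟨p, rfl⟩ :=
      exists_bind₁_charpolyCoeffs_diagonal_X_eq (hi.isSymmetric_of_eval_eq_diagonal hs)
    have hf : f = fun A => eval (charpolyCoeffs A) p :=
      eq_of_forall_diagonal_eq hp hi (isPolyFun_eval_charpolyCoeffs p)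
        (isInvariantFun_eval_charpolyCoeffs p) fun d => by rw [← hs, eval_charpolyCoeffs_diagonal]
    refine ⟨p, fun A => congrFun hf A, fun q hq => ?_⟩
    refine bind₁_charpolyCoeffs_diagonal_X_injective (MvPolynomial.funext fun d => ?_)
    rw [← eval_charpolyCoeffs_diagonal, hs]
    exact (hq (diagonal d)).symm
end
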